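/- Let p_1, p_2, p_3, p_4 ≥ 0 with p_1 + p_2 + p_3 + p_4 = 1 and let W be the binary input symmetric quaternary output kernel. Let X be a random variable with finitely many values, Y a random variable taking finitely many values in lists over {0,1}, and Y^(4) a random variable taking values in lists over {0⁻,0⁺,1⁻,1⁺} with |Y^(4)| = |Y| pointwise, such that P(Y^(4)=y′ | X=x, Y=y) = ∏_{i=1}^{|y|} W(y_i, y′_i) whenever P(X=x, Y=y) > 0 and |y′| = |y|. Then I(X; Y^(4)) ≥ I(X; Y) − E[|Y|] · [ H(p_1,p_2,p_3,p_4) + log₂((p_1+p_3)² + (p_2+p_4)²) ], where H(p_1,p_2,p_3,p_4) = −∑_{i=1}^4 p_i log₂ p_i. -/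

import Mathlib

/-!
Gibbs' inequality bounds `H(X | Y⁽⁴⁾)` by the expected code length `-log₂ Q(X | Y⁽⁴⁾)` of any
sub-probability kernel `Q` that is positive on the support. Take
`Q(x | v) = ∑_y P(x | y) ∏_i q(y_i | v_i)`, where `q(b | k) = W(b, k) / ∑_{b'} W(b', k)` is the
posterior of `W` under a uniform input. Keeping only the summand `y = Y` gives
`-log₂ Q(X | Y⁽⁴⁾) ≤ -log₂ P(X | Y) - ∑_i log₂ q(Y_i | Y⁽⁴⁾_i)`. In expectation the first term is
`H(X | Y)`; since `Y⁽⁴⁾` is the memoryless output of `W` on `Y`, the second is `E[|Y|]` times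
`∑_k W(b, k) (-log₂ q(b | k))`, which for either input `b` equals
`H(p₁,p₂,p₃,p₄) + (p₁+p₃) log₂ (p₁+p₃) + (p₂+p₄) log₂ (p₂+p₄)`. The weighted AM-GM inequality
`u^u v^v ≤ u² + v²` for `u + v = 1` bounds the last two terms by `log₂ ((p₁+p₃)² + (p₂+p₄)²)`.
-/

open scoped BigOperators
open Classical

noncomputable section

/-- A finite probability space: a probability mass function on a finite type. -/
structure FinProb (Ω : Type*) [Fintype Ω] where
  p : Ω → ℝ
  nonneg : ∀ ω, 0 ≤ p ω
  sum_one : ∑ ω, p ω = 1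

variable {Ω : Type*} [Fintype Ω]

/-- Probability of an event. -/
def pr (μ : FinProb Ω) (E : Ω → Prop) : ℝ :=
  ∑ ω, if E ω then μ.p ω else 0

/-- Shannon entropy (base 2) of a random variable with finitely many values. -/
def entropy {S : Type*} (μ : FinProb Ω) (U : Ω → S) : ℝ :=
  -∑ u ∈ Finset.univ.image U,
    pr μ (fun ω => U ω = u) * Real.logb 2 (pr μ (fun ω => U ω = u))

/-- Conditional Shannon entropy `H(U | V)`. -/
def condEntropy {S T : Type*} (μ : FinProb Ω) (U : Ω → S) (V : Ω → T) : ℝ :=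
  ∑ v ∈ (Finset.univ.image V).filter (fun v => 0 < pr μ (fun ω => V ω = v)),
    pr μ (fun ω => V ω = v) *
      (-∑ u ∈ Finset.univ.image U,
        (pr μ (fun ω => U ω = u ∧ V ω = v) / pr μ (fun ω => V ω = v)) *
          Real.logb 2 (pr μ (fun ω => U ω = u ∧ V ω = v) / pr μ (fun ω => V ω = v)))

/-- Mutual information `I(U;V) = H(U) - H(U|V)`. -/
def mutualInfo {S T : Type*} (μ : FinProb Ω) (U : Ω → S) (V : Ω → T) : ℝ :=
  entropy μ U - condEntropy μ U V

/-- Expected length of a list-valued random variable. -/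
def expLen {A : Type*} (μ : FinProb Ω) (Y : Ω → List A) : ℝ :=
  ∑ ω, μ.p ω * (Y ω).length

/-- The binary input symmetric quaternary output kernel. Input alphabet `{0,1}` is `Bool`;
the output alphabet `{0⁻,0⁺,1⁻,1⁺}` is modeled as `Bool × Bool`, where `(c, s)` denotes
`c⁻` when `s = false` and `c⁺` when `s = true`:
`W b b⁻ = p1`, `W b b⁺ = p2`, `W b (1-b)⁻ = p3`, `W b (1-b)⁺ = p4`. -/
def quatKernel (p1 p2 p3 p4 : ℝ) : Bool → Bool × Bool → ℝ :=
  fun b k => if k.1 = b then (if k.2 then p2 else p1) else (if k.2 then p4 else p3)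

open Finset

section Probability

variable {S T : Type*} (μ : FinProb Ω)

lemma pr_nonneg (E : Ω → Prop) : 0 ≤ pr μ E :=
  sum_nonneg fun ω _ => by split_ifs <;> simp [μ.nonneg ω]

lemma pr_congr {E F : Ω → Prop} (h : ∀ ω, E ω ↔ F ω) : pr μ E = pr μ F := by
  simp only [pr, h]

lemma pr_mono {E F : Ω → Prop} (h : ∀ ω, E ω → F ω) : pr μ E ≤ pr μ F :=
  sum_le_sum fun ω _ => by
    by_cases hE : E ω
    · simp [hE, h ω hE]
    · simp only [hE, if_false]
      split_ifs <;> simp [μ.nonneg ω]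

lemma pr_pos_of_mem {E : Ω → Prop} {ω : Ω} (hω : 0 < μ.p ω) (hE : E ω) : 0 < pr μ E :=
  hω.trans_le <| by
    unfold pr
    simpa [hE] using single_le_sum (f := fun ω' => if E ω' then μ.p ω' else 0)
      (fun ω' _ => by split_ifs <;> simp [μ.nonneg ω']) (mem_univ ω)

lemma exists_pos_of_pr_pos {E : Ω → Prop} (h : 0 < pr μ E) : ∃ ω, 0 < μ.p ω ∧ E ω := by
  by_contra! hc
  refine h.not_ge (sum_nonpos fun ω _ => ?_)
  split_ifs with hE
  · exact not_lt.mp fun hω => hc ω hω hE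
  · exact le_rfl

lemma pr_eq_sum_pr_and (X : Ω → S) (E : Ω → Prop) :
    pr μ E = ∑ x ∈ univ.image X, pr μ (fun ω => X ω = x ∧ E ω) := by
  simp only [pr]
  rw [sum_comm]
  refine sum_congr rfl fun ω _ => ?_
  rw [sum_eq_single_of_mem (X ω) (mem_image_of_mem X (mem_univ ω))]
  · simp
  · intro x _ hx
    simp [Ne.symm hx]

lemma sum_mul_eq_sum_sum_pr_mul (V : Ω → T) {U : Type*} (W : Ω → U) (s : T → Finset U)
    (hs : ∀ ω, W ω ∈ s (V ω)) (F : T → U → ℝ) :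
    ∑ ω, μ.p ω * F (V ω) (W ω) =
      ∑ v ∈ univ.image V, ∑ w ∈ s v, pr μ (fun ω => W ω = w ∧ V ω = v) * F v w := by
  simp only [pr, sum_mul]
  rw [sum_congr rfl fun v _ => sum_comm, sum_comm]
  refine sum_congr rfl fun ω _ => ?_
  rw [sum_eq_single_of_mem (V ω) (mem_image_of_mem V (mem_univ ω)),
    sum_eq_single_of_mem (W ω) (hs ω)]
  · simp
  · intro w _ hw
    simp [Ne.symm hw]
  · intro v _ hv
    exact sum_eq_zero fun w _ => by simp [Ne.symm hv]

lemma sum_mul_eq_sum_pr_mul (V : Ω → T) (F : T → ℝ) :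
    ∑ ω, μ.p ω * F (V ω) = ∑ v ∈ univ.image V, pr μ (fun ω => V ω = v) * F v := by
  simpa using sum_mul_eq_sum_sum_pr_mul μ V V (fun v => {v}) (fun ω => mem_singleton_self _)
    fun v _ => F v

end Probability

section Gibbs

open Real

lemma mul_logb_sub_logb_le {a b : ℝ} (ha : 0 ≤ a) (hb : 0 ≤ b) (hab : 0 < a → 0 < b) :
    a * (logb 2 b - logb 2 a) ≤ (b - a) / log 2 := by
  have hlog2 : 0 < log 2 := log_pos one_lt_two
  rcases ha.eq_or_lt with rfl | ha
  · simpa using div_nonneg hb hlog2.le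
  have hb' := hab ha
  have key := log_le_sub_one_of_pos (div_pos hb' ha)
  rw [log_div hb'.ne' ha.ne'] at key
  rw [logb, logb, ← sub_div, mul_div_assoc', div_le_div_iff_of_pos_right hlog2]
  calc a * (log b - log a) ≤ a * (b / a - 1) := by gcongr
    _ = b - a := by field_simp

lemma sum_mul_neg_logb_le {ι : Type*} (s : Finset ι) {a b : ι → ℝ} (ha : ∀ i ∈ s, 0 ≤ a i)
    (hb : ∀ i ∈ s, 0 ≤ b i) (hab : ∀ i ∈ s, 0 < a i → 0 < b i)
    (hsum : ∑ i ∈ s, b i ≤ ∑ i ∈ s, a i) :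
    ∑ i ∈ s, a i * -logb 2 (a i) ≤ ∑ i ∈ s, a i * -logb 2 (b i) := by
  have hdiff : ∑ i ∈ s, a i * (logb 2 (b i) - logb 2 (a i)) ≤ 0 :=
    calc _ ≤ ∑ i ∈ s, (b i - a i) / log 2 :=
          sum_le_sum fun i hi => mul_logb_sub_logb_le (ha i hi) (hb i hi) (hab i hi)
      _ = (∑ i ∈ s, b i - ∑ i ∈ s, a i) / log 2 := by rw [← sum_div, sum_sub_distrib]
      _ ≤ 0 := div_nonpos_of_nonpos_of_nonneg (sub_nonpos.mpr hsum) (log_pos one_lt_two).le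
  simp only [mul_sub, sum_sub_distrib, mul_neg, sum_neg_distrib] at hdiff ⊢
  linarith

end Gibbs

section CondEntropy

variable {S T : Type*} (μ : FinProb Ω)

def condPr (U : Ω → S) (V : Ω → T) (u : S) (v : T) : ℝ :=
  pr μ (fun ω => U ω = u ∧ V ω = v) / pr μ (fun ω => V ω = v)

variable (U : Ω → S) (V : Ω → T)

lemma condPr_nonneg (u : S) (v : T) : 0 ≤ condPr μ U V u v :=
  div_nonneg (pr_nonneg μ _) (pr_nonneg μ _)

lemma condPr_pos {ω : Ω} (hω : 0 < μ.p ω) : 0 < condPr μ U V (U ω) (V ω) :=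
  div_pos (pr_pos_of_mem μ hω ⟨rfl, rfl⟩) (pr_pos_of_mem μ hω rfl)

lemma sum_condPr (v : T) :
    ∑ u ∈ univ.image U, condPr μ U V u v =
      pr μ (fun ω => V ω = v) / pr μ (fun ω => V ω = v) := by
  simp only [condPr, ← sum_div, ← pr_eq_sum_pr_and]

lemma sum_condPr_le_one (v : T) : ∑ u ∈ univ.image U, condPr μ U V u v ≤ 1 :=
  (sum_condPr μ U V v).trans_le (div_self_le_one _)

lemma sum_pr_mul_sum_condPr_mul (F : S → T → ℝ) :
    ∑ v ∈ (univ.image V).filter (fun v => 0 < pr μ (fun ω => V ω = v)),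
        pr μ (fun ω => V ω = v) * ∑ u ∈ univ.image U, condPr μ U V u v * F u v =
      ∑ ω, μ.p ω * F (U ω) (V ω) := by
  rw [sum_mul_eq_sum_sum_pr_mul μ V U (fun _ => univ.image U)
    (fun ω => mem_image_of_mem U (mem_univ ω)) (fun v u => F u v), sum_filter]
  refine sum_congr rfl fun v _ => ?_
  split_ifs with hv
  · rw [mul_sum]
    refine sum_congr rfl fun u _ => ?_
    rw [condPr]
    field_simp
  · have hv : pr μ (fun ω => V ω = v) = 0 := le_antisymm (not_lt.mp hv) (pr_nonneg μ _)
    refine (sum_eq_zero fun u _ => ?_).symm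
    rw [le_antisymm (hv ▸ pr_mono μ fun ω h => h.2) (pr_nonneg μ _), zero_mul]

lemma condEntropy_eq_sum_pr_mul_sum :
    condEntropy μ U V =
      ∑ v ∈ (univ.image V).filter (fun v => 0 < pr μ (fun ω => V ω = v)),
        pr μ (fun ω => V ω = v) *
          ∑ u ∈ univ.image U, condPr μ U V u v * -Real.logb 2 (condPr μ U V u v) := by
  simp only [condEntropy, condPr, mul_neg, sum_neg_distrib]

lemma condEntropy_eq_sum_neg_logb_condPr :
    condEntropy μ U V = ∑ ω, μ.p ω * -Real.logb 2 (condPr μ U V (U ω) (V ω)) := by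
  rw [condEntropy_eq_sum_pr_mul_sum,
    sum_pr_mul_sum_condPr_mul μ U V fun u v => -Real.logb 2 (condPr μ U V u v)]

theorem condEntropy_le_sum_neg_logb (Q : S → T → ℝ) (hQ0 : ∀ u v, 0 ≤ Q u v)
    (hQ1 : ∀ v, ∑ u ∈ univ.image U, Q u v ≤ 1)
    (hQpos : ∀ ω, 0 < μ.p ω → 0 < Q (U ω) (V ω)) :
    condEntropy μ U V ≤ ∑ ω, μ.p ω * -Real.logb 2 (Q (U ω) (V ω)) := by
  rw [condEntropy_eq_sum_pr_mul_sum,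
    ← sum_pr_mul_sum_condPr_mul μ U V fun u v => -Real.logb 2 (Q u v)]
  refine sum_le_sum fun v hv => mul_le_mul_of_nonneg_left ?_ (pr_nonneg μ _)
  refine sum_mul_neg_logb_le _ (fun u _ => condPr_nonneg μ U V u v) (fun u _ => hQ0 u v)
    (fun u _ hu => ?_) ?_
  · have : 0 < pr μ (fun ω => U ω = u ∧ V ω = v) :=
      (pr_nonneg μ _).lt_of_ne fun h => hu.ne' (by rw [condPr, ← h, zero_div])
    obtain ⟨ω, hω, rfl, rfl⟩ := exists_pos_of_pr_pos μ this
    exact hQpos ω hω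
  · rw [sum_condPr, div_self (mem_filter.mp hv).2.ne']
    exact hQ1 v

end CondEntropy

section Kernel

variable {α β : Type*}

lemma List.zipWith_ofFn {γ : Type*} (f : α → β → γ) :
    ∀ {n : ℕ} (g : Fin n → α) (w : Fin n → β),
      List.zipWith f (List.ofFn g) (List.ofFn w) = List.ofFn fun i => f (g i) (w i)
  | 0, _, _ => rfl
  | _ + 1, g, w => by
    rw [List.ofFn_succ, List.ofFn_succ, List.zipWith_cons_cons, List.zipWith_ofFn f,
      List.ofFn_succ]

lemma List.exists_eq_ofFn (l : List α) {n : ℕ} (h : l.length = n) :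
    ∃ g : Fin n → α, l = List.ofFn g := by
  subst h
  exact ⟨l.get, (List.ofFn_get l).symm⟩

def listKernel (q : α → β → ℝ) (y : List α) (v : List β) : ℝ :=
  if y.length = v.length then (List.zipWith q y v).prod else 0

variable (q : α → β → ℝ)

lemma listKernel_ofFn {n : ℕ} (g : Fin n → α) (w : Fin n → β) :
    listKernel q (List.ofFn g) (List.ofFn w) = ∏ i, q (g i) (w i) := by
  simp [listKernel, List.zipWith_ofFn, List.prod_ofFn]

lemma listKernel_nonneg (hq : ∀ a b, 0 ≤ q a b) (y : List α) (v : List β) :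
    0 ≤ listKernel q y v := by
  unfold listKernel
  split_ifs
  · exact List.prod_nonneg fun c hc => by
      obtain ⟨i, rfl⟩ := List.mem_iff_get.mp hc
      simp [hq]
  · exact le_rfl

lemma neg_logb_listKernel {y : List α} {v : List β} (h : listKernel q y v ≠ 0) :
    -Real.logb 2 (listKernel q y v) = (List.zipWith (fun a b => -Real.logb 2 (q a b)) y v).sum := by
  have hlen : y.length = v.length := by
    by_contra hne
    simp [listKernel, hne] at h
  generalize hn : y.length = n at hlen
  obtain ⟨g, rfl⟩ := List.exists_eq_ofFn y hn
  obtain ⟨w, rfl⟩ := List.exists_eq_ofFn v hlen.symm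
  rw [listKernel_ofFn] at h ⊢
  rw [Real.logb_prod _ _ fun i _ => Finset.prod_ne_zero_iff.mp h i (mem_univ i),
    List.zipWith_ofFn, List.sum_ofFn, sum_neg_distrib]

variable [Fintype α]

lemma sum_listKernel_le_one (hq0 : ∀ a b, 0 ≤ q a b) (hq1 : ∀ b, ∑ a, q a b ≤ 1)
    (s : Finset (List α)) (v : List β) : ∑ y ∈ s, listKernel q y v ≤ 1 := by
  generalize hn : v.length = n
  obtain ⟨w, rfl⟩ := List.exists_eq_ofFn v hn
  set t := (univ : Finset (Fin n → α)).image List.ofFn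
  calc ∑ y ∈ s, listKernel q y (List.ofFn w)
      ≤ ∑ y ∈ s ∪ t, listKernel q y (List.ofFn w) :=
        sum_le_sum_of_subset_of_nonneg subset_union_left
          fun y _ _ => listKernel_nonneg q hq0 y _
    _ = ∑ y ∈ t, listKernel q y (List.ofFn w) := by
        refine (sum_subset subset_union_right fun y _ hy => ?_).symm
        rw [listKernel, if_neg]
        intro hlen
        obtain ⟨g, rfl⟩ := List.exists_eq_ofFn y (hlen.trans List.length_ofFn)
        exact hy (mem_image_of_mem _ (mem_univ g))
    _ = ∑ g : Fin n → α, ∏ i, q (g i) (w i) := by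
        rw [sum_image fun _ _ _ _ h => List.ofFn_injective h]
        simp only [listKernel_ofFn]
    _ = ∏ i, ∑ a, q a (w i) := (Fintype.prod_sum fun i a => q a (w i)).symm
    _ ≤ 1 := prod_le_one (fun i _ => sum_nonneg fun a _ => hq0 a (w i)) fun i _ => hq1 (w i)

end Kernel

section ReverseKernel

variable {α β : Type*} [Fintype α] (K : α → β → ℝ)

/-- The posterior of the channel `K` under the uniform prior on inputs. -/
def reverseKernel (a : α) (b : β) : ℝ :=
  K a b / ∑ a', K a' b

variable {K}

lemma reverseKernel_nonneg (hK : ∀ a b, 0 ≤ K a b) (a : α) (b : β) :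
    0 ≤ reverseKernel K a b :=
  div_nonneg (hK a b) (sum_nonneg fun a' _ => hK a' b)

lemma sum_reverseKernel_le_one (b : β) : ∑ a, reverseKernel K a b ≤ 1 := by
  simp only [reverseKernel]
  rw [← sum_div]
  exact div_self_le_one _

lemma reverseKernel_pos (hK : ∀ a b, 0 ≤ K a b) {a : α} {b : β} (h : 0 < K a b) :
    0 < reverseKernel K a b :=
  div_pos h (h.trans_le (single_le_sum (fun a' _ => hK a' b) (mem_univ a)))

end ReverseKernel

lemma sum_prod_mul_sum_eq {α β : Type*} [Fintype β] {K : α → β → ℝ}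
    (hK1 : ∀ a, ∑ b, K a b = 1) (f : α → β → ℝ) {n : ℕ} (g : Fin n → α) :
    ∑ w : Fin n → β, (∏ i, K (g i) (w i)) * ∑ i, f (g i) (w i) =
      ∑ i, ∑ b, K (g i) b * f (g i) b := by
  simp_rw [mul_sum]
  rw [sum_comm]
  refine sum_congr rfl fun i _ => ?_
  set F := Function.update (fun j b => K (g j) b) i (fun b => K (g i) b * f (g i) b)
  have hFi : F i = fun b => K (g i) b * f (g i) b := Function.update_self ..
  have hFj : ∀ j ≠ i, F j = K (g j) := fun j hj => Function.update_of_ne hj ..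
  have hF : ∀ w : Fin n → β, (∏ j, K (g j) (w j)) * f (g i) (w i) = ∏ j, F j (w j) := by
    intro w
    rw [← mul_prod_erase univ (fun j => F j (w j)) (mem_univ i), hFi,
      ← mul_prod_erase univ (fun j => K (g j) (w j)) (mem_univ i)]
    have : ∏ j ∈ univ.erase i, F j (w j) = ∏ j ∈ univ.erase i, K (g j) (w j) :=
      prod_congr rfl fun j hj => by rw [hFj j (ne_of_mem_erase hj)]
    rw [this]
    ring
  rw [sum_congr rfl fun w _ => hF w, ← Fintype.prod_sum, ← mul_prod_erase univ _ (mem_univ i),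
    prod_eq_one fun j hj => by rw [hFj j (ne_of_mem_erase hj), hK1], hFi, mul_one]

section Channel

variable {S α β : Type*} (μ : FinProb Ω)

/-- The posterior `y ↦ x` of `X` given `Y`, composed with a kernel `q` from `Z` back to `Y`. -/
def backwardKernel (X : Ω → S) (Y : Ω → List α) (q : α → β → ℝ) (x : S) (v : List β) : ℝ :=
  ∑ y ∈ univ.image Y, condPr μ X Y x y * listKernel q y v

variable (X : Ω → S) (Y : Ω → List α) {q : α → β → ℝ}

lemma backwardKernel_nonneg (hq0 : ∀ a b, 0 ≤ q a b) (x : S) (v : List β) :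
    0 ≤ backwardKernel μ X Y q x v :=
  sum_nonneg fun y _ => mul_nonneg (condPr_nonneg μ X Y x y) (listKernel_nonneg q hq0 y v)

lemma sum_backwardKernel_le_one [Fintype α] (hq0 : ∀ a b, 0 ≤ q a b)
    (hq1 : ∀ b, ∑ a, q a b ≤ 1) (v : List β) :
    ∑ x ∈ univ.image X, backwardKernel μ X Y q x v ≤ 1 := by
  simp only [backwardKernel]
  rw [sum_comm]
  calc ∑ y ∈ univ.image Y, ∑ x ∈ univ.image X, condPr μ X Y x y * listKernel q y v
      = ∑ y ∈ univ.image Y, (∑ x ∈ univ.image X, condPr μ X Y x y) * listKernel q y v := by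
        simp only [sum_mul]
    _ ≤ ∑ y ∈ univ.image Y, listKernel q y v :=
        sum_le_sum fun y _ => mul_le_of_le_one_left (listKernel_nonneg q hq0 y v)
          (sum_condPr_le_one μ X Y y)
    _ ≤ 1 := sum_listKernel_le_one q hq0 hq1 _ v

lemma condPr_mul_listKernel_le_backwardKernel (hq0 : ∀ a b, 0 ≤ q a b) (ω : Ω) (v : List β) :
    condPr μ X Y (X ω) (Y ω) * listKernel q (Y ω) v ≤ backwardKernel μ X Y q (X ω) v :=
  single_le_sum (f := fun y => condPr μ X Y (X ω) y * listKernel q y v)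
    (fun y _ => mul_nonneg (condPr_nonneg μ X Y _ y) (listKernel_nonneg q hq0 y v))
    (mem_image_of_mem Y (mem_univ ω))

lemma neg_logb_backwardKernel_le (hq0 : ∀ a b, 0 ≤ q a b) {ω : Ω} (hω : 0 < μ.p ω)
    {v : List β} (hv : 0 < listKernel q (Y ω) v) :
    -Real.logb 2 (backwardKernel μ X Y q (X ω) v) ≤
      -Real.logb 2 (condPr μ X Y (X ω) (Y ω)) +
        (List.zipWith (fun a b => -Real.logb 2 (q a b)) (Y ω) v).sum := by
  have hpos := mul_pos (condPr_pos μ X Y hω) hv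
  rw [← neg_logb_listKernel q hv.ne', ← neg_add,
    ← Real.logb_mul (condPr_pos μ X Y hω).ne' hv.ne', neg_le_neg_iff]
  exact Real.logb_le_logb_of_le one_lt_two hpos
    (condPr_mul_listKernel_le_backwardKernel μ X Y hq0 ω v)

end Channel

/-- `Z` is the output of the memoryless channel `K` fed with the word `Y`, independently of `X`
given `Y`. -/
def IsMemorylessChannel {S α β : Type*} (μ : FinProb Ω) (K : α → β → ℝ) (X : Ω → S)
    (Y : Ω → List α) (Z : Ω → List β) : Prop :=
  (∀ ω, (Z ω).length = (Y ω).length) ∧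
    ∀ (x : S) (n : ℕ) (y : Fin n → α) (y' : Fin n → β),
      0 < pr μ (fun ω => X ω = x ∧ Y ω = List.ofFn y) →
      pr μ (fun ω => Z ω = List.ofFn y' ∧ X ω = x ∧ Y ω = List.ofFn y) /
        pr μ (fun ω => X ω = x ∧ Y ω = List.ofFn y) = ∏ i, K (y i) (y' i)

namespace IsMemorylessChannel

variable {S α β : Type*} {μ : FinProb Ω} {K : α → β → ℝ} {X : Ω → S} {Y : Ω → List α}
  {Z : Ω → List β} (hch : IsMemorylessChannel μ K X Y Z)
include hch

lemma pr_output_and_eq_mul {n : ℕ} (x : S) (g : Fin n → α) (w : Fin n → β) :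
    pr μ (fun ω => Z ω = List.ofFn w ∧ X ω = x ∧ Y ω = List.ofFn g) =
      pr μ (fun ω => X ω = x ∧ Y ω = List.ofFn g) * ∏ i, K (g i) (w i) := by
  rcases (pr_nonneg μ _).lt_or_eq with h | h
  · rw [← hch.2 x n g w h]
    field_simp
  · rw [← h, zero_mul]
    exact le_antisymm (h ▸ pr_mono μ fun ω h => h.2) (pr_nonneg μ _)

lemma pr_output_and_input_eq_mul {n : ℕ} (g : Fin n → α) (w : Fin n → β) :
    pr μ (fun ω => Z ω = List.ofFn w ∧ Y ω = List.ofFn g) =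
      pr μ (fun ω => Y ω = List.ofFn g) * ∏ i, K (g i) (w i) := by
  rw [pr_eq_sum_pr_and μ X, pr_eq_sum_pr_and μ X, sum_mul]
  refine sum_congr rfl fun x _ => ?_
  rw [← hch.pr_output_and_eq_mul]
  exact pr_congr μ fun ω => and_left_comm

lemma sum_mul_eq_sum_mul_sum_prod [Fintype β] (G : List α → List β → ℝ) :
    ∑ ω, μ.p ω * G (Y ω) (Z ω) =
      ∑ ω, μ.p ω * ∑ w : Fin (Y ω).length → β,
        (∏ i, K ((Y ω).get i) (w i)) * G (Y ω) (List.ofFn w) := by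
  have hZ : ∀ ω, Z ω ∈ (univ : Finset (Fin (Y ω).length → β)).image List.ofFn := fun ω => by
    obtain ⟨w, hw⟩ := List.exists_eq_ofFn (Z ω) (hch.1 ω)
    exact hw ▸ mem_image_of_mem _ (mem_univ w)
  rw [sum_mul_eq_sum_sum_pr_mul μ Y Z (fun y => (univ : Finset (Fin y.length → β)).image List.ofFn)
    hZ G, sum_mul_eq_sum_pr_mul μ Y
    fun y => ∑ w : Fin y.length → β, (∏ i, K (y.get i) (w i)) * G y (List.ofFn w)]
  refine sum_congr rfl fun y _ => ?_
  rw [sum_image fun _ _ _ _ h => List.ofFn_injective h, mul_sum]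
  refine sum_congr rfl fun w _ => ?_
  have := hch.pr_output_and_input_eq_mul y.get w
  simp only [List.ofFn_get] at this
  rw [this]
  ring

lemma listKernel_reverseKernel_pos [Fintype α] (hK : ∀ a b, 0 ≤ K a b) {ω : Ω}
    (hω : 0 < μ.p ω) : 0 < listKernel (reverseKernel K) (Y ω) (Z ω) := by
  obtain ⟨g, hg⟩ := List.exists_eq_ofFn (Y ω) rfl
  obtain ⟨w, hw⟩ := List.exists_eq_ofFn (Z ω) (hch.1 ω)
  have hpos : 0 < pr μ (fun ω' => Z ω' = List.ofFn w ∧ Y ω' = List.ofFn g) :=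
    pr_pos_of_mem μ hω ⟨hw, hg⟩
  rw [hch.pr_output_and_input_eq_mul] at hpos
  have hprod := (pos_of_mul_pos_right hpos (pr_nonneg μ _)).ne'
  rw [hg, hw, listKernel_ofFn]
  exact prod_pos fun i _ => reverseKernel_pos hK
    ((hK _ _).lt_of_ne (prod_ne_zero_iff.mp hprod i (mem_univ i)).symm)

lemma sum_mul_sum_zipWith_le [Fintype β] (hK1 : ∀ a, ∑ b, K a b = 1) (f : α → β → ℝ) (c : ℝ)
    (hc : ∀ a, ∑ b, K a b * f a b ≤ c) :
    ∑ ω, μ.p ω * (List.zipWith f (Y ω) (Z ω)).sum ≤ expLen μ Y * c := by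
  rw [hch.sum_mul_eq_sum_mul_sum_prod fun y v => (List.zipWith f y v).sum, expLen, sum_mul]
  refine sum_le_sum fun ω _ => ?_
  rw [mul_assoc]
  refine mul_le_mul_of_nonneg_left ?_ (μ.nonneg ω)
  set y := Y ω
  have hzip (w : Fin y.length → β) :
      (List.zipWith f y (List.ofFn w)).sum = ∑ i, f (y.get i) (w i) := by
    have := List.zipWith_ofFn f y.get w
    rw [List.ofFn_get] at this
    rw [this, List.sum_ofFn]
  calc ∑ w : Fin y.length → β, (∏ i, K (y.get i) (w i)) * (List.zipWith f y (List.ofFn w)).sum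
      = ∑ i, ∑ b, K (y.get i) b * f (y.get i) b := by
        simp only [hzip]
        exact sum_prod_mul_sum_eq hK1 f y.get
    _ ≤ ∑ _i : Fin y.length, c := sum_le_sum fun i _ => hc _
    _ = y.length * c := by simp

end IsMemorylessChannel

theorem IsMemorylessChannel.condEntropy_le {S α β : Type*} [Fintype α] [Fintype β]
    {μ : FinProb Ω} {K : α → β → ℝ} {X : Ω → S} {Y : Ω → List α} {Z : Ω → List β}
    (hch : IsMemorylessChannel μ K X Y Z) (hK0 : ∀ a b, 0 ≤ K a b) (hK1 : ∀ a, ∑ b, K a b = 1)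
    (c : ℝ) (hc : ∀ a, ∑ b, K a b * -Real.logb 2 (reverseKernel K a b) ≤ c) :
    condEntropy μ X Z ≤ condEntropy μ X Y + expLen μ Y * c := by
  have hq0 := reverseKernel_nonneg hK0
  set f : α → β → ℝ := fun a b => -Real.logb 2 (reverseKernel K a b)
  calc condEntropy μ X Z
      ≤ ∑ ω, μ.p ω * -Real.logb 2 (backwardKernel μ X Y (reverseKernel K) (X ω) (Z ω)) :=
        condEntropy_le_sum_neg_logb μ X Z _ (backwardKernel_nonneg μ X Y hq0)
          (sum_backwardKernel_le_one μ X Y hq0 sum_reverseKernel_le_one) fun ω hω =>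
            (mul_pos (condPr_pos μ X Y hω) (hch.listKernel_reverseKernel_pos hK0 hω)).trans_le
              (condPr_mul_listKernel_le_backwardKernel μ X Y hq0 ω _)
    _ ≤ ∑ ω, μ.p ω * (-Real.logb 2 (condPr μ X Y (X ω) (Y ω)) +
          (List.zipWith f (Y ω) (Z ω)).sum) := by
        refine sum_le_sum fun ω _ => ?_
        rcases (μ.nonneg ω).eq_or_lt with hω | hω
        · simp [← hω]
        · exact mul_le_mul_of_nonneg_left (neg_logb_backwardKernel_le μ X Y hq0 hω
            (hch.listKernel_reverseKernel_pos hK0 hω)) hω.le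
    _ = condEntropy μ X Y + ∑ ω, μ.p ω * (List.zipWith f (Y ω) (Z ω)).sum := by
        rw [condEntropy_eq_sum_neg_logb_condPr, ← sum_add_distrib]
        simp only [mul_add]
    _ ≤ condEntropy μ X Y + expLen μ Y * c := by
        gcongr
        exact hch.sum_mul_sum_zipWith_le hK1 f c hc

section Quaternary

open Real

lemma mul_neg_logb_div_add_mul_neg_logb_div (a c : ℝ) :
    a * -logb 2 (a / (a + c)) + c * -logb 2 (c / (a + c)) =
      -(a * logb 2 a) - c * logb 2 c + (a + c) * logb 2 (a + c) := by
  rcases eq_or_ne a 0 with rfl | ha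
  · by_cases hc : c = 0 <;> simp [hc]
  rcases eq_or_ne c 0 with rfl | hc
  · simp [div_self ha]
  rcases eq_or_ne (a + c) 0 with hac | hac
  · -- `a / 0 = 0` and `logb 2 (-a) = logb 2 a` make both sides vanish
    rw [eq_neg_of_add_eq_zero_right hac, add_neg_cancel, logb_neg_eq_logb]
    simp
  rw [logb_div ha hac, logb_div hc hac]
  ring

lemma mul_logb_add_mul_logb_le_logb {u v : ℝ} (hu : 0 ≤ u) (hv : 0 ≤ v) (huv : u + v = 1) :
    u * logb 2 u + v * logb 2 v ≤ logb 2 (u ^ 2 + v ^ 2) := by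
  rcases hu.eq_or_lt with rfl | hu'
  · obtain rfl : v = 1 := by linarith
    simp
  rcases hv.eq_or_lt with rfl | hv'
  · obtain rfl : u = 1 := by linarith
    simp
  have hgm : u ^ u * v ^ v ≤ u * u + v * v := geom_mean_le_arith_mean2_weighted hu hv hu hv huv
  calc u * logb 2 u + v * logb 2 v = logb 2 (u ^ u * v ^ v) := by
        rw [logb_mul (rpow_pos_of_pos hu' u).ne' (rpow_pos_of_pos hv' v).ne',
          logb_rpow_eq_mul_logb_of_pos hu', logb_rpow_eq_mul_logb_of_pos hv']
    _ ≤ logb 2 (u ^ 2 + v ^ 2) :=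
        logb_le_logb_of_le one_lt_two (by positivity) (by linarith [sq u, sq v])

variable {p1 p2 p3 p4 : ℝ}

lemma quatKernel_nonneg (h1 : 0 ≤ p1) (h2 : 0 ≤ p2) (h3 : 0 ≤ p3) (h4 : 0 ≤ p4)
    (b : Bool) (k : Bool × Bool) : 0 ≤ quatKernel p1 p2 p3 p4 b k := by
  unfold quatKernel
  split_ifs <;> assumption

lemma sum_quatKernel (hsum : p1 + p2 + p3 + p4 = 1) (b : Bool) :
    ∑ k, quatKernel p1 p2 p3 p4 b k = 1 := by
  rw [Fintype.sum_prod_type]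
  cases b <;> simp [quatKernel] <;> linarith

lemma sum_quatKernel_mul_neg_logb_reverseKernel (b : Bool) :
    ∑ k, quatKernel p1 p2 p3 p4 b k * -logb 2 (reverseKernel (quatKernel p1 p2 p3 p4) b k) =
      (-(p1 * logb 2 p1) - p2 * logb 2 p2 - p3 * logb 2 p3 - p4 * logb 2 p4) +
        ((p1 + p3) * logb 2 (p1 + p3) + (p2 + p4) * logb 2 (p2 + p4)) := by
  -- the column sums of `W` are `p1 + p3` at the outputs `c⁻` and `p2 + p4` at the outputs `c⁺`
  have e13 := mul_neg_logb_div_add_mul_neg_logb_div p1 p3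
  have e24 := mul_neg_logb_div_add_mul_neg_logb_div p2 p4
  rw [Fintype.sum_prod_type]
  cases b <;> simp [reverseKernel, quatKernel, add_comm p3 p1, add_comm p4 p2] <;> linarith

end Quaternary

/-- for the binary input symmetric quaternary output kernel,
`I(X;Y⁽⁴⁾) ≥ I(X;Y) − E[|Y|]·[H(p1,p2,p3,p4) + log₂((p1+p3)² + (p2+p4)²)]`. -/
theorem stmt14 {Ω S : Type*} [Fintype Ω] (μ : FinProb Ω)
    (p1 p2 p3 p4 : ℝ)
    (h1 : 0 ≤ p1) (h2 : 0 ≤ p2) (h3 : 0 ≤ p3) (h4 : 0 ≤ p4)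
    (hsum : p1 + p2 + p3 + p4 = 1)
    (X : Ω → S) (Y : Ω → List Bool) (Y4 : Ω → List (Bool × Bool))
    (hlen : ∀ ω, (Y4 ω).length = (Y ω).length)
    (hcond : ∀ (x : S) (n : ℕ) (y : Fin n → Bool) (y' : Fin n → Bool × Bool),
      0 < pr μ (fun ω => X ω = x ∧ Y ω = List.ofFn y) →
      pr μ (fun ω => Y4 ω = List.ofFn y' ∧ X ω = x ∧ Y ω = List.ofFn y) /
        pr μ (fun ω => X ω = x ∧ Y ω = List.ofFn y) = ∏ i, quatKernel p1 p2 p3 p4 (y i) (y' i)) :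
    mutualInfo μ X Y4 ≥ mutualInfo μ X Y -
      expLen μ Y * ((-(p1 * Real.logb 2 p1) - p2 * Real.logb 2 p2 -
          p3 * Real.logb 2 p3 - p4 * Real.logb 2 p4) +
        Real.logb 2 ((p1 + p3) ^ 2 + (p2 + p4) ^ 2)) := by
  have hamgm := mul_logb_add_mul_logb_le_logb (u := p1 + p3) (v := p2 + p4) (by positivity)
    (by positivity) (by linarith)
  have hch : IsMemorylessChannel μ (quatKernel p1 p2 p3 p4) X Y Y4 := ⟨hlen, hcond⟩
  set H := -(p1 * Real.logb 2 p1) - p2 * Real.logb 2 p2 - p3 * Real.logb 2 p3 -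
    p4 * Real.logb 2 p4
  have hXY4 := hch.condEntropy_le (quatKernel_nonneg h1 h2 h3 h4) (sum_quatKernel hsum)
    (H + Real.logb 2 ((p1 + p3) ^ 2 + (p2 + p4) ^ 2)) fun b => by
      rw [sum_quatKernel_mul_neg_logb_reverseKernel]
      linarith
  unfold mutualInfo
  linarith

end
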